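/- If the information ratio of Thompson sampling is bounded: Γ_t ≤ Γ almost surely for all 1 ≤ t ≤ T, then the Bayesian regret satisfies E[Regret(T)] ≤ √(Γ · H(α₁) · T), where H(α₁) is the entropy of the prior distribution of the optimal arm. -/

import Mathlib

open scoped Classical

noncomputable section

variable {Ω : Type*} [Fintype Ω]

/-- Probability that the random variable `X` takes the value `a`, under the pmf `p`
on the finite sample space `Ω`. -/
def probEq {α : Type*} (p : Ω → ℝ) (X : Ω → α) (a : α) : ℝ :=
  ∑ ω, if X ω = a then p ω else 0

/-- Expectation of `f` under the pmf `p`. -/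
def pmfExp (p : Ω → ℝ) (f : Ω → ℝ) : ℝ := ∑ ω, p ω * f ω

/-- Shannon entropy (in nats) of the distribution of `X` under `p`. -/
def entropyOf {α : Type*} (p : Ω → ℝ) (X : Ω → α) : ℝ :=
  -∑ ω, p ω * Real.log (probEq p X (X ω))

/-- Mutual information `I(X;Y)` under the pmf `p`. -/
def mutualInfo {α β : Type*} (p : Ω → ℝ) (X : Ω → α) (Y : Ω → β) : ℝ :=
  ∑ ω, p ω * Real.log (probEq p (fun ω' => (X ω', Y ω')) (X ω, Y ω) /
    (probEq p X (X ω) * probEq p Y (Y ω)))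

/-- The pmf `p` conditioned on the event `W = c`. -/
def condOn {γ : Type*} (p : Ω → ℝ) (W : Ω → γ) (c : γ) : Ω → ℝ :=
  fun ω => (if W ω = c then p ω else 0) / probEq p W c

/-- Conditional mutual information `I(X;Y ∣ W)` under the pmf `p`. -/
def condMutualInfo {α β γ : Type*} (p : Ω → ℝ) (X : Ω → α) (Y : Ω → β) (W : Ω → γ) : ℝ :=
  ∑ ω, p ω * Real.log
    ((probEq p (fun ω' => (X ω', Y ω', W ω')) (X ω, Y ω, W ω) * probEq p W (W ω)) /
      (probEq p (fun ω' => (X ω', W ω')) (X ω, W ω) *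
        probEq p (fun ω' => (Y ω', W ω')) (Y ω, W ω)))

/-- The history after `t` rounds of the observation process `O`. -/
def history {T : ℕ} {𝒪 : Type*} (O : Fin T → Ω → 𝒪) (t : Fin T) (ω : Ω) :
    Fin T → Option 𝒪 :=
  fun s => if (s : ℕ) < (t : ℕ) then some (O s ω) else none

/-!
Group round `t` by the history `H_t`: the expected regret of the round is the average over
histories of the conditional one-step regrets, each at most `√(Γ · I(A*; (A_t, Y_t) | H_t = h))`,
so by Cauchy–Schwarz it is at most `√(Γ · I(A*; (A_t, Y_t) | H_t))`. A second Cauchy–Schwarz over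
the `T` rounds gives `√(T · Γ · ∑_t I(A*; (A_t, Y_t) | H_t))`, and by the chain rule this sum of
conditional informations telescopes to `I(A*; H_T) ≤ H(A*)`.
-/

section Probability

variable {α β γ : Type*} {p : Ω → ℝ}

lemma probEq_nonneg (hp : ∀ ω, 0 ≤ p ω) (X : Ω → α) (a : α) : 0 ≤ probEq p X a :=
  Finset.sum_nonneg fun ω _ => ite_nonneg (hp ω) le_rfl

lemma le_probEq_self (hp : ∀ ω, 0 ≤ p ω) (X : Ω → α) (ω : Ω) : p ω ≤ probEq p X (X ω) := by
  simpa [probEq] using Finset.single_le_sum (f := fun ω' => if X ω' = X ω then p ω' else 0)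
    (fun ω' _ => ite_nonneg (hp ω') le_rfl) (Finset.mem_univ ω)

lemma probEq_pos (hp : ∀ ω, 0 ≤ p ω) (X : Ω → α) {ω : Ω} (hω : p ω ≠ 0) :
    0 < probEq p X (X ω) :=
  ((hp ω).lt_of_ne' hω).trans_le (le_probEq_self hp X ω)

lemma probEq_congr {X : Ω → α} {X' : Ω → β} {a : α} {a' : β}
    (h : ∀ ω, X ω = a ↔ X' ω = a') : probEq p X a = probEq p X' a' :=
  Finset.sum_congr rfl fun ω _ => if_congr (h ω) rfl rfl

lemma probEq_mono (hp : ∀ ω, 0 ≤ p ω) {X : Ω → α} {Z : Ω → β} {a : α} {b : β}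
    (h : ∀ ω, X ω = a → Z ω = b) : probEq p X a ≤ probEq p Z b :=
  Finset.sum_le_sum fun ω _ => by
    by_cases hX : X ω = a
    · simp [hX, h ω hX]
    · simpa [hX] using ite_nonneg (hp ω) le_rfl

lemma sum_probEq_mul {s : Finset γ} (Z : Ω → γ) (hs : ∀ ω, Z ω ∈ s) (g : γ → ℝ) :
    ∑ z ∈ s, probEq p Z z * g z = ∑ ω, p ω * g (Z ω) := by
  simp only [probEq, Finset.sum_mul, ite_mul, zero_mul]
  rw [Finset.sum_comm]
  simp [hs]

lemma sum_probEq {s : Finset γ} (Z : Ω → γ) (hs : ∀ ω, Z ω ∈ s) :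
    ∑ z ∈ s, probEq p Z z = ∑ ω, p ω := by
  simpa using sum_probEq_mul (p := p) Z hs fun _ => 1

lemma probEq_condOn (H : Ω → γ) (h : γ) (X : Ω → α) (x : α) :
    probEq (condOn p H h) X x = probEq p (fun ω => (X ω, H ω)) (x, h) / probEq p H h := by
  rw [probEq, probEq, Finset.sum_div]
  refine Finset.sum_congr rfl fun ω _ => ?_
  by_cases hX : X ω = x <;> by_cases hH : H ω = h <;> simp [condOn, hX, hH]

lemma condOn_nonneg (hp : ∀ ω, 0 ≤ p ω) (H : Ω → γ) (h : γ) (ω : Ω) : 0 ≤ condOn p H h ω :=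
  div_nonneg (ite_nonneg (hp ω) le_rfl) (probEq_nonneg hp H h)

lemma sum_condOn {H : Ω → γ} {h : γ} (hh : probEq p H h ≠ 0) : ∑ ω, condOn p H h ω = 1 := by
  simp only [condOn]
  rw [← Finset.sum_div, ← probEq, div_self hh]

lemma probEq_mul_condOn (hp : ∀ ω, 0 ≤ p ω) (H : Ω → γ) (h : γ) (ω : Ω) :
    probEq p H h * condOn p H h ω = if H ω = h then p ω else 0 := by
  by_cases hh : probEq p H h = 0
  · split_ifs with hH
    · rw [hh, zero_mul]
      have hpω : p ω ≤ 0 := hh ▸ hH ▸ le_probEq_self hp H ω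
      exact (le_antisymm hpω (hp ω)).symm
    · simp [condOn, hH]
  · exact mul_div_cancel₀ _ hh

lemma sum_probEq_mul_pmfExp_condOn (hp : ∀ ω, 0 ≤ p ω) {s : Finset γ} (H : Ω → γ)
    (hs : ∀ ω, H ω ∈ s) (f : Ω → ℝ) :
    ∑ h ∈ s, probEq p H h * pmfExp (condOn p H h) f = pmfExp p f := by
  simp only [pmfExp, Finset.mul_sum, ← mul_assoc, probEq_mul_condOn hp, ite_mul, zero_mul]
  rw [Finset.sum_comm]
  simp [hs]

end Probability

section Information

variable {α β γ : Type*} {p : Ω → ℝ}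

lemma sum_mul_marginals_div_joint_le_one (hp : ∀ ω, 0 ≤ p ω) (hpsum : ∑ ω, p ω = 1)
    (X : Ω → α) (Y : Ω → β) :
    ∑ ω, p ω * (probEq p X (X ω) * probEq p Y (Y ω) /
      probEq p (fun ω' => (X ω', Y ω')) (X ω, Y ω)) ≤ 1 := by
  set Z : Ω → α × β := fun ω => (X ω, Y ω)
  have hXY : ∑ z ∈ Finset.univ.image X ×ˢ Finset.univ.image Y,
      probEq p X z.1 * probEq p Y z.2 = 1 := by
    rw [Finset.sum_product, ← Finset.sum_mul_sum, sum_probEq X (by simp), sum_probEq Y (by simp),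
      hpsum, one_mul]
  rw [← sum_probEq_mul Z (s := Finset.univ.image Z) (by simp)
    fun z => probEq p X z.1 * probEq p Y z.2 / probEq p Z z, ← hXY]
  calc ∑ z ∈ Finset.univ.image Z, probEq p Z z * (probEq p X z.1 * probEq p Y z.2 / probEq p Z z)
      ≤ ∑ z ∈ Finset.univ.image Z, probEq p X z.1 * probEq p Y z.2 := by
        refine Finset.sum_le_sum fun z _ => ?_
        by_cases hz : probEq p Z z = 0
        · simpa [hz] using mul_nonneg (probEq_nonneg hp X z.1) (probEq_nonneg hp Y z.2)
        · rw [mul_div_cancel₀ _ hz]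
    _ ≤ _ := by
        refine Finset.sum_le_sum_of_subset_of_nonneg (fun z hz => ?_) fun z _ _ =>
          mul_nonneg (probEq_nonneg hp X z.1) (probEq_nonneg hp Y z.2)
        obtain ⟨ω, -, rfl⟩ := Finset.mem_image.mp hz
        simp [Z]

theorem mutualInfo_nonneg (hp : ∀ ω, 0 ≤ p ω) (hpsum : ∑ ω, p ω = 1)
    (X : Ω → α) (Y : Ω → β) : 0 ≤ mutualInfo p X Y := by
  set J : Ω → ℝ := fun ω => probEq p (fun ω' => (X ω', Y ω')) (X ω, Y ω)
  set Q : Ω → ℝ := fun ω => probEq p X (X ω) * probEq p Y (Y ω)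
  have hlog : ∀ ω, p ω * (1 - Q ω / J ω) ≤ p ω * Real.log (J ω / Q ω) := by
    intro ω
    by_cases hω : p ω = 0
    · simp [hω]
    · have hQ : 0 < Q ω := mul_pos (probEq_pos hp X hω) (probEq_pos hp Y hω)
      have hJ : 0 < J ω := probEq_pos hp (fun ω' => (X ω', Y ω')) hω
      refine mul_le_mul_of_nonneg_left ?_ (hp ω)
      simpa using Real.one_sub_inv_le_log_of_pos (div_pos hJ hQ)
  calc (0 : ℝ) ≤ ∑ ω, p ω - ∑ ω, p ω * (Q ω / J ω) := by
        rw [hpsum, sub_nonneg]; exact sum_mul_marginals_div_joint_le_one hp hpsum X Y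
    _ = ∑ ω, p ω * (1 - Q ω / J ω) := by simp only [mul_sub, mul_one, Finset.sum_sub_distrib]
    _ ≤ mutualInfo p X Y := Finset.sum_le_sum fun ω _ => hlog ω

theorem mutualInfo_le_entropyOf (hp : ∀ ω, 0 ≤ p ω) (X : Ω → α) (Z : Ω → β) :
    mutualInfo p X Z ≤ entropyOf p X := by
  rw [entropyOf, ← Finset.sum_neg_distrib, mutualInfo]
  refine Finset.sum_le_sum fun ω _ => ?_
  by_cases hω : p ω = 0
  · simp [hω]
  · have hX := probEq_pos hp X hω
    have hZ := probEq_pos hp Z hω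
    have hJ := probEq_pos hp (fun ω' => (X ω', Z ω')) hω
    have hJZ : probEq p (fun ω' => (X ω', Z ω')) (X ω, Z ω) ≤ probEq p Z (Z ω) :=
      probEq_mono hp fun ω' hω' => congrArg Prod.snd hω'
    rw [← mul_neg, ← Real.log_inv]
    refine mul_le_mul_of_nonneg_left (Real.log_le_log (by positivity) ?_) (hp ω)
    rwa [div_le_iff₀ (by positivity), inv_mul_cancel_left₀ hX.ne']

theorem mutualInfo_prod_right (hp : ∀ ω, 0 ≤ p ω) (X : Ω → α) (Y : Ω → β) (W : Ω → γ) :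
    mutualInfo p X (fun ω => (Y ω, W ω)) = mutualInfo p X W + condMutualInfo p X Y W := by
  rw [mutualInfo, mutualInfo, condMutualInfo, ← Finset.sum_add_distrib]
  refine Finset.sum_congr rfl fun ω _ => ?_
  by_cases hω : p ω = 0
  · simp [hω]
  · have hX := probEq_pos hp X hω
    have hW := probEq_pos hp W hω
    have hYW := probEq_pos hp (fun ω' => (Y ω', W ω')) hω
    have hXW := probEq_pos hp (fun ω' => (X ω', W ω')) hω
    have hXYW := probEq_pos hp (fun ω' => (X ω', Y ω', W ω')) hω
    rw [← mul_add, ← Real.log_mul (by positivity) (by positivity)]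
    congr 2
    field_simp

theorem mutualInfo_const (hp : ∀ ω, 0 ≤ p ω) (hpsum : ∑ ω, p ω = 1) (X : Ω → α) (c : β) :
    mutualInfo p X (fun _ => c) = 0 := by
  refine Finset.sum_eq_zero fun ω _ => ?_
  by_cases hω : p ω = 0
  · simp [hω]
  · have hc : probEq p (fun _ : Ω => c) c = 1 := by simpa [probEq] using hpsum
    have hXc : probEq p (fun ω' => (X ω', c)) (X ω, c) = probEq p X (X ω) :=
      probEq_congr fun ω' => by simp
    rw [hc, hXc, mul_one, div_self (probEq_pos hp X hω).ne', Real.log_one, mul_zero]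

theorem mutualInfo_congr_right {Z : Ω → β} {Z' : Ω → γ}
    (hZ : ∀ ω₁ ω₂, Z ω₁ = Z ω₂ ↔ Z' ω₁ = Z' ω₂) (X : Ω → α) :
    mutualInfo p X Z = mutualInfo p X Z' := by
  refine Finset.sum_congr rfl fun ω _ => ?_
  rw [probEq_congr (X' := Z') fun ω' => hZ ω' ω,
    probEq_congr (X' := fun ω' => (X ω', Z' ω')) (a' := (X ω, Z' ω)) fun ω' => by
      simp [hZ ω' ω]]

end Information

section Conditioning

variable {α β γ : Type*} {p : Ω → ℝ}

lemma mutualInfo_condOn_eq_pmfExp (hp : ∀ ω, 0 ≤ p ω) (X : Ω → α) (Y : Ω → β) (H : Ω → γ)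
    (h : γ) :
    mutualInfo (condOn p H h) X Y = pmfExp (condOn p H h) fun ω => Real.log
      ((probEq p (fun ω' => (X ω', Y ω', H ω')) (X ω, Y ω, H ω) * probEq p H (H ω)) /
        (probEq p (fun ω' => (X ω', H ω')) (X ω, H ω) *
          probEq p (fun ω' => (Y ω', H ω')) (Y ω, H ω))) := by
  refine Finset.sum_congr rfl fun ω _ => ?_
  by_cases hH : H ω = h
  swap
  · simp [condOn, hH]
  subst hH
  by_cases hω : p ω = 0
  · simp [condOn, hω]
  have hXYH : probEq p (fun ω' => ((X ω', Y ω'), H ω')) ((X ω, Y ω), H ω) =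
      probEq p (fun ω' => (X ω', Y ω', H ω')) (X ω, Y ω, H ω) :=
    probEq_congr fun ω' => by simp [and_assoc]
  have hHω := probEq_pos hp H hω
  have hXH := probEq_pos hp (fun ω' => (X ω', H ω')) hω
  have hYH := probEq_pos hp (fun ω' => (Y ω', H ω')) hω
  simp only [probEq_condOn, hXYH]
  congr 2
  field_simp

theorem condMutualInfo_eq_sum (hp : ∀ ω, 0 ≤ p ω) {s : Finset γ} (X : Ω → α) (Y : Ω → β)
    (H : Ω → γ) (hs : ∀ ω, H ω ∈ s) :
    condMutualInfo p X Y H = ∑ h ∈ s, probEq p H h * mutualInfo (condOn p H h) X Y := by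
  simp only [mutualInfo_condOn_eq_pmfExp hp, sum_probEq_mul_pmfExp_condOn hp H hs]
  rfl

lemma probEq_mul_mutualInfo_condOn_nonneg (hp : ∀ ω, 0 ≤ p ω) (H : Ω → γ) (h : γ)
    (X : Ω → α) (Y : Ω → β) : 0 ≤ probEq p H h * mutualInfo (condOn p H h) X Y := by
  by_cases hh : probEq p H h = 0
  · rw [hh, zero_mul]
  · exact mul_nonneg (probEq_nonneg hp H h)
      (mutualInfo_nonneg (condOn_nonneg hp H h) (sum_condOn hh) X Y)

theorem condMutualInfo_nonneg (hp : ∀ ω, 0 ≤ p ω) (X : Ω → α) (Y : Ω → β) (H : Ω → γ) :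
    0 ≤ condMutualInfo p X Y H := by
  rw [condMutualInfo_eq_sum hp X Y H (s := Finset.univ.image H) (by simp)]
  exact Finset.sum_nonneg fun h _ => probEq_mul_mutualInfo_condOn_nonneg hp H h X Y

end Conditioning

/-- Unlike `history`, the horizon `k` ranges over `ℕ`, so that the full history `k = T` is
available. -/
def historyBefore {T : ℕ} {E : Type*} (Y : Fin T → Ω → E) (k : ℕ) (ω : Ω) : Fin T → Option E :=
  fun s => if (s : ℕ) < k then some (Y s ω) else none

section History

variable {α E : Type*} {T : ℕ} {p : Ω → ℝ}

theorem mutualInfo_historyBefore_succ (hp : ∀ ω, 0 ≤ p ω) (X : Ω → α) (Y : Fin T → Ω → E)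
    (t : Fin T) :
    mutualInfo p X (historyBefore Y (t + 1)) =
      mutualInfo p X (historyBefore Y t) + condMutualInfo p X (Y t) (historyBefore Y t) := by
  have hfiber : ∀ ω₁ ω₂, historyBefore Y (t + 1) ω₁ = historyBefore Y (t + 1) ω₂ ↔
      (Y t ω₁, historyBefore Y t ω₁) = (Y t ω₂, historyBefore Y t ω₂) := by
    intro ω₁ ω₂
    simp only [historyBefore, funext_iff, Prod.mk.injEq]
    constructor
    · intro h
      refine ⟨by simpa using h t, fun s => ?_⟩
      split_ifs with hs
      · simpa [Nat.lt_succ_of_lt hs] using h s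
      · rfl
    · rintro ⟨ht, h⟩ s
      split_ifs with hs
      · rcases Nat.lt_succ_iff_lt_or_eq.mp hs with hs | hs
        · simpa [hs] using h s
        · rw [Fin.ext hs, ht]
      · rfl
  rw [mutualInfo_congr_right hfiber, mutualInfo_prod_right hp]

theorem sum_condMutualInfo_historyBefore (hp : ∀ ω, 0 ≤ p ω) (hpsum : ∑ ω, p ω = 1)
    (X : Ω → α) (Y : Fin T → Ω → E) :
    ∑ t : Fin T, condMutualInfo p X (Y t) (historyBefore Y t) =
      mutualInfo p X (historyBefore Y T) := by
  set F : ℕ → ℝ := fun k => mutualInfo p X (historyBefore Y k)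
  have hF0 : F 0 = 0 := by
    have hnone : historyBefore Y 0 = fun _ _ => none := by
      funext ω s
      simp [historyBefore]
    simp only [F, hnone, mutualInfo_const hp hpsum]
  calc ∑ t : Fin T, condMutualInfo p X (Y t) (historyBefore Y t)
      = ∑ t : Fin T, (F (t + 1) - F t) := by
        simp only [F, mutualInfo_historyBefore_succ hp, add_sub_cancel_left]
    _ = F T := by
        rw [Fin.sum_univ_eq_sum_range (fun k => F (k + 1) - F k), Finset.sum_range_sub, hF0,
          sub_zero]

end History

section Regret

variable {α β γ : Type*} {p : Ω → ℝ}

lemma sum_mul_sqrt_le {ι : Type*} (s : Finset ι) {w x : ι → ℝ} (hw : ∀ i, 0 ≤ w i)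
    (hwx : ∀ i, 0 ≤ w i * x i) :
    ∑ i ∈ s, w i * √(x i) ≤ √(∑ i ∈ s, w i) * √(∑ i ∈ s, w i * x i) := by
  have hsplit : ∀ i, w i * √(x i) = √(w i) * √(w i * x i) := fun i => by
    rw [Real.sqrt_mul (hw i), ← mul_assoc, Real.mul_self_sqrt (hw i)]
  simpa only [hsplit] using Real.sum_sqrt_mul_sqrt_le s hw hwx

theorem pmfExp_le_sqrt_mul_condMutualInfo (hp : ∀ ω, 0 ≤ p ω) (hpsum : ∑ ω, p ω = 1)
    {Γ : ℝ} (hΓ : 0 ≤ Γ) (f : Ω → ℝ) (X : Ω → α) (Y : Ω → β) (H : Ω → γ)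
    (hratio : ∀ h, probEq p H h ≠ 0 →
      (pmfExp (condOn p H h) f) ^ 2 ≤ Γ * mutualInfo (condOn p H h) X Y) :
    pmfExp p f ≤ √(Γ * condMutualInfo p X Y H) := by
  set s := Finset.univ.image H
  have hs : ∀ ω, H ω ∈ s := by simp [s]
  have hround : ∀ h, probEq p H h * pmfExp (condOn p H h) f ≤
      probEq p H h * √(Γ * mutualInfo (condOn p H h) X Y) := by
    intro h
    by_cases hh : probEq p H h = 0
    · simp [hh]
    · exact mul_le_mul_of_nonneg_left ((le_abs_self _).trans (Real.abs_le_sqrt (hratio h hh)))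
        (probEq_nonneg hp H h)
  calc pmfExp p f = ∑ h ∈ s, probEq p H h * pmfExp (condOn p H h) f :=
        (sum_probEq_mul_pmfExp_condOn hp H hs f).symm
    _ ≤ ∑ h ∈ s, probEq p H h * √(Γ * mutualInfo (condOn p H h) X Y) :=
        Finset.sum_le_sum fun h _ => hround h
    _ ≤ √(∑ h ∈ s, probEq p H h) *
          √(∑ h ∈ s, probEq p H h * (Γ * mutualInfo (condOn p H h) X Y)) :=
        sum_mul_sqrt_le s (probEq_nonneg hp H) fun h => by
          rw [mul_left_comm]
          exact mul_nonneg hΓ (probEq_mul_mutualInfo_condOn_nonneg hp H h X Y)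
    _ = √(Γ * condMutualInfo p X Y H) := by
        simp only [sum_probEq H hs, hpsum, Real.sqrt_one, one_mul, mul_left_comm _ Γ,
          ← Finset.mul_sum, condMutualInfo_eq_sum hp X Y H hs]

end Regret

theorem bayesian_regret_le_sqrt_of_information_ratio_general
    {Ω Arm 𝒪 : Type*} [Fintype Ω]
    (p : Ω → ℝ) (hp : ∀ ω, 0 ≤ p ω) (hpsum : ∑ ω, p ω = 1)
    (T : ℕ) (Astar : Ω → Arm) (At : Fin T → Ω → Arm) (O : Fin T → Ω → 𝒪)
    (rstar r : Fin T → Ω → ℝ) (Γ : ℝ) (hΓ : 0 ≤ Γ)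
    (hratio : ∀ (t : Fin T) (h : Fin T → Option (Arm × 𝒪)),
      probEq p (history (fun s ω => (At s ω, O s ω)) t) h ≠ 0 →
      (pmfExp (condOn p (history (fun s ω => (At s ω, O s ω)) t) h)
          (fun ω => rstar t ω - r t ω)) ^ 2 ≤
        Γ * mutualInfo (condOn p (history (fun s ω => (At s ω, O s ω)) t) h)
          Astar (fun ω => (At t ω, O t ω))) :
    ∑ t : Fin T, pmfExp p (fun ω => rstar t ω - r t ω) ≤
      Real.sqrt (Γ * entropyOf p Astar * T) := by
  set Y : Fin T → Ω → Arm × 𝒪 := fun s ω => (At s ω, O s ω)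
  set I : Fin T → ℝ := fun t => condMutualInfo p Astar (Y t) (historyBefore Y t)
  calc ∑ t : Fin T, pmfExp p (fun ω => rstar t ω - r t ω)
      ≤ ∑ t : Fin T, 1 * √(Γ * I t) := Finset.sum_le_sum fun t _ => by
        rw [one_mul]
        exact pmfExp_le_sqrt_mul_condMutualInfo hp hpsum hΓ _ _ _ _ (hratio t)
    _ ≤ √(∑ _t : Fin T, 1) * √(∑ t : Fin T, 1 * (Γ * I t)) :=
        sum_mul_sqrt_le _ (fun _ => zero_le_one) fun t => by
          simpa using mul_nonneg hΓ (condMutualInfo_nonneg hp _ _ _)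
    _ = √T * √(Γ * mutualInfo p Astar (historyBefore Y T)) := by
        simp only [one_mul, ← Finset.mul_sum, I, sum_condMutualInfo_historyBefore hp hpsum,
          Finset.sum_const, Finset.card_univ, Fintype.card_fin, nsmul_eq_mul, mul_one]
    _ ≤ √T * √(Γ * entropyOf p Astar) := by
        gcongr
        exact mutualInfo_le_entropyOf hp _ _
    _ = √(Γ * entropyOf p Astar * T) := by
        rw [Real.sqrt_mul' _ (Nat.cast_nonneg T), mul_comm]

/-- Russo–Van Roy regret bound for Thompson sampling: if the information ratio is bounded,
i.e. for every round `t` and every history `h` of positive probability the squared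
expected one-step regret is at most `Γ` times the information gained about the optimal
arm `A*` from `(A_t, Y_{t,A_t})`, then the Bayesian regret after `T` rounds is at most
`√(Γ · H(α₁) · T)`, where `H(α₁)` is the entropy of the prior distribution of `A*`. -/
theorem bayesian_regret_le_sqrt_of_information_ratio
    {Ω Arm 𝒪 : Type*} [Fintype Ω] [Fintype Arm]
    (p : Ω → ℝ) (hp : ∀ ω, 0 ≤ p ω) (hpsum : ∑ ω, p ω = 1)
    (T : ℕ) (Astar : Ω → Arm) (At : Fin T → Ω → Arm) (O : Fin T → Ω → 𝒪)
    (rstar r : Fin T → Ω → ℝ) (Γ : ℝ) (hΓ : 0 ≤ Γ)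
    (hratio : ∀ (t : Fin T) (h : Fin T → Option (Arm × 𝒪)),
      probEq p (history (fun s ω => (At s ω, O s ω)) t) h ≠ 0 →
      (pmfExp (condOn p (history (fun s ω => (At s ω, O s ω)) t) h)
          (fun ω => rstar t ω - r t ω)) ^ 2 ≤
        Γ * mutualInfo (condOn p (history (fun s ω => (At s ω, O s ω)) t) h)
          Astar (fun ω => (At t ω, O t ω))) :
    ∑ t : Fin T, pmfExp p (fun ω => rstar t ω - r t ω) ≤
      Real.sqrt (Γ * entropyOf p Astar * T) :=
  bayesian_regret_le_sqrt_of_information_ratio_general p hp hpsum T Astar At O rstar r Γ hΓ hratio
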